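/- For φ ∈ L¹(ℝ²), j ∈ ℤ, and (k,l) ∈ ℤ², the kernel of the Weyl transform (λ = 1) of the 2^{−2j}-twisted translate satisfies K_{(T^t_{(k,l)})^{2^{−2j}}φ}(ξ,η) = e^{πi2^{−2j}kl} e^{πik(1+2^{−2j})ξ} e^{πik(1−2^{−2j})η} K_{e(((2^{−2j}−1)/2)l, 0)φ}(ξ+l, η), where (e(a,b)φ)(x,y) = e^{2πi(ax+by)} φ(x,y). -/
import Mathlib

open MeasureTheory Real Complex Filter

noncomputable section

/-- `ce r = e^{i r}`. -/
def ce (r : ℝ) : ℂ := Complex.exp (Complex.I * r)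

/-- Kernel `K^λ_f(ξ,η) = ∫ f(x, η-ξ) e^{π i λ x (ξ+η)} dx` (curried `f`). -/
def Kker (lam : ℝ) (f : ℝ → ℝ → ℂ) (ξ η : ℝ) : ℂ :=
  ∫ x : ℝ, f x (η - ξ) * ce (π * lam * x * (ξ + η))

/-- λ-twisted translation `(T^t_{(k,l)})^λ`. -/
def Twist (lam : ℝ) (k l : ℤ) (φ : ℝ → ℝ → ℂ) (x y : ℝ) : ℂ :=
  ce (π * lam * (x * (l : ℝ) - y * (k : ℝ))) * φ (x - (k : ℝ)) (y - (l : ℝ))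

/-- Dilation `𝒟_{2^j}`. -/
def Dil (j : ℤ) (φ : ℝ → ℝ → ℂ) (x y : ℝ) : ℂ :=
  ((2:ℝ) ^ j : ℂ) * φ ((2:ℝ) ^ j * x) ((2:ℝ) ^ j * y)

/-- Modulation `e(a,b)`. -/
def Emod (a b : ℝ) (φ : ℝ → ℝ → ℂ) (x y : ℝ) : ℂ :=
  ce (2 * π * (a * x + b * y)) * φ x y

/-- Inverse Fourier transform in the `t` variable: `ψ^λ`. -/
def psiLam (ψ : ℝ → ℝ → ℝ → ℂ) (lam : ℝ) (x y : ℝ) : ℂ :=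
  ∫ t : ℝ, ψ x y t * ce (2 * π * lam * t)

/-- Left translation `L_{(k,l,m)}` on the Heisenberg group `ℍ`. -/
def Ltrans (k l m : ℤ) (ψ : ℝ → ℝ → ℝ → ℂ) (x y t : ℝ) : ℂ :=
  ψ (x - (k : ℝ)) (y - (l : ℝ)) (t - (m : ℝ) + (1/2) * (y * (k : ℝ) - x * (l : ℝ)))

/-- Nonisotropic dilation `δ_{2^j}` on `ℍ`. -/
def Hdil (j : ℤ) (ψ : ℝ → ℝ → ℝ → ℂ) (x y t : ℝ) : ℂ :=
  ((2:ℝ) ^ (2*j) : ℂ) * ψ ((2:ℝ) ^ j * x) ((2:ℝ) ^ j * y) ((2:ℝ) ^ (2*j) * t)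

/-- Kernel of the Weyl transform (`λ = 1`) of the `2^{-2j}`-twisted translate
of `φ`, in terms of a modulation of `φ`. -/
theorem kernel_twisted_translate_weyl (φ : ℝ → ℝ → ℂ)
    (hφ : Integrable (fun p : ℝ × ℝ => φ p.1 p.2)) (j k l : ℤ) :
    ∀ ξ η : ℝ,
      Kker 1 (Twist ((2:ℝ) ^ (-(2*j))) k l φ) ξ η =
        ce (π * (2:ℝ) ^ (-(2*j)) * (k : ℝ) * (l : ℝ)) *
        ce (π * (k : ℝ) * (1 + (2:ℝ) ^ (-(2*j))) * ξ) *
        ce (π * (k : ℝ) * (1 - (2:ℝ) ^ (-(2*j))) * η) *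
        Kker 1 (Emod ((((2:ℝ) ^ (-(2*j)) - 1) / 2) * (l : ℝ)) 0 φ) (ξ + (l : ℝ)) η := by
  intro ξ η
  set μ : ℝ := (2:ℝ) ^ (-(2*j)) with hμ
  have ce_mul : ∀ a b : ℝ, ce a * ce b = ce (a + b) := by
    intro a b
    simp [ce, ← Complex.exp_add, mul_add]
  have key : ∀ x : ℝ,
      Twist μ k l φ (x + (k:ℝ)) (η - ξ) * ce (π * 1 * (x + (k:ℝ)) * (ξ + η)) =
      (ce (π * μ * (k:ℝ) * (l:ℝ)) * ce (π * (k:ℝ) * (1 + μ) * ξ) *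
        ce (π * (k:ℝ) * (1 - μ) * η)) *
      (Emod (((μ - 1) / 2) * (l:ℝ)) 0 φ x (η - (ξ + (l:ℝ))) *
        ce (π * 1 * x * (ξ + (l:ℝ) + η))) := by
    intro x
    simp only [Twist, Emod, add_sub_cancel_right, mul_zero, add_zero]
    rw [show η - ξ - (l:ℝ) = η - (ξ + (l:ℝ)) by ring]
    rw [mul_right_comm, ce_mul, ce_mul, ce_mul]
    rw [show ∀ (a b c : ℝ) (p : ℂ), ce a * (ce b * p * ce c) = ce (a + b + c) * p by
      intros; simp only [ce, Complex.ofReal_add, mul_add, Complex.exp_add]; ring]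
    congr 1
    simp only [ce]
    congr 1
    push_cast
    ring
  unfold Kker
  rw [← MeasureTheory.integral_add_right_eq_self
      (fun x : ℝ => Twist μ k l φ x (η - ξ) * ce (π * 1 * x * (ξ + η))) (k:ℝ)]
  simp only [key]
  rw [integral_const_mul]
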